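/- Let E be a module over L⁰ and K ⊆ E an L⁰-convex and L⁰-absorbent set, and let X ∈ E. Then a ∈ L⁰ is a greatest lower bound (a.e. order) of {Y ∈ L⁰₊ : X ∈ Y•K} if and only if a is a greatest lower bound of {Y ∈ L⁰₊₊ : X ∈ Y•K}; i.e., p_K(X) = ess.inf{Y ∈ L⁰₊₊ : X ∈ Y•K}. -/

import Mathlib

open MeasureTheory Filter Pointwise

variable {Ω : Type*} [MeasurableSpace Ω] (P : MeasureTheory.Measure Ω ) [IsProbabilityMeasure P]

noncomputable instance : CommRing (Ω →ₘ[P] ℝ) :=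
  { (inferInstance : AddCommGroup (Ω →ₘ[P] ℝ)),
    (inferInstance : CommMonoid (Ω →ₘ[P] ℝ)) with
    left_distrib := fun f g h => AEEqFun.ext (by
      filter_upwards [AEEqFun.coeFn_mul f (g + h), AEEqFun.coeFn_add g h,
        AEEqFun.coeFn_add (f * g) (f * h), AEEqFun.coeFn_mul f g, AEEqFun.coeFn_mul f h]
        with ω h1 h2 h3 h4 h5
      simp only [Pi.mul_apply, Pi.add_apply] at *
      rw [h1, h2, h3, h4, h5, mul_add])
    right_distrib := fun f g h => AEEqFun.ext (by
      filter_upwards [AEEqFun.coeFn_mul (f + g) h, AEEqFun.coeFn_add f g,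
        AEEqFun.coeFn_add (f * h) (g * h), AEEqFun.coeFn_mul f h, AEEqFun.coeFn_mul g h]
        with ω h1 h2 h3 h4 h5
      simp only [Pi.mul_apply, Pi.add_apply] at *
      rw [h1, h2, h3, h4, h5, add_mul])
    zero_mul := fun f => AEEqFun.ext (by
      filter_upwards [AEEqFun.coeFn_mul 0 f, AEEqFun.coeFn_zero (β := ℝ) (μ := P)]
        with ω h1 h2
      simp only [Pi.mul_apply, Pi.zero_apply] at *
      rw [h1, h2, zero_mul])
    mul_zero := fun f => AEEqFun.ext (by
      filter_upwards [AEEqFun.coeFn_mul f 0, AEEqFun.coeFn_zero (β := ℝ) (μ := P)]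
        with ω h1 h2
      simp only [Pi.mul_apply, Pi.zero_apply] at *
      rw [h1, h2, mul_zero]) }

/-- `L⁰₊₊`: the set of a.e. strictly positive elements. -/
def L0pp (Y : Ω →ₘ[P] ℝ) : Prop := ∀ᵐ ω ∂P, 0 < Y ω

/-- The equivalence class of the indicator function of a measurable set. -/
noncomputable def ind (A : Set Ω) (hA : MeasurableSet A) : Ω →ₘ[P] ℝ :=
  AEEqFun.mk (A.indicator fun _ => (1 : ℝ)) (aestronglyMeasurable_const.indicator hA)

section ModuleDefs

variable {E : Type*} [AddCommGroup E] [Module (Ω →ₘ[P] ℝ) E]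

/-- `L⁰`-convexity of a subset of an `L⁰`-module. -/
def IsL0Convex (U : Set E) : Prop :=
  ∀ X₁ ∈ U, ∀ X₂ ∈ U, ∀ Y : Ω →ₘ[P] ℝ, 0 ≤ Y → Y ≤ 1 → Y • X₁ + (1 - Y) • X₂ ∈ U

/-- `L⁰`-absorbency of a subset of an `L⁰`-module. -/
def IsL0Absorbent (U : Set E) : Prop :=
  ∀ X : E, ∃ Y : Ω →ₘ[P] ℝ, L0pp P Y ∧ X ∈ Y • U

/-- `L⁰`-balancedness of a subset of an `L⁰`-module. -/
def IsL0Balanced (U : Set E) : Prop :=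
  ∀ X ∈ U, ∀ Y : Ω →ₘ[P] ℝ, |Y| ≤ 1 → Y • X ∈ U

/-- Closedness under countable concatenations. -/
def IsConcatClosed (C : Set E) : Prop :=
  ∀ (A : ℕ → Set Ω) (hA : ∀ n, MeasurableSet (A n)),
    Pairwise (Function.onFun Disjoint A) → (⋃ n, A n) = Set.univ →
    ∀ X : E, (∀ n, ∃ Xn ∈ C, ind P (A n) (hA n) • X = ind P (A n) (hA n) • Xn) → X ∈ C

/-- `L⁰`-seminorm. -/
def IsL0Seminorm (p : E → (Ω →ₘ[P] ℝ)) : Prop :=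
  (∀ X : E, 0 ≤ p X) ∧ (∀ (Y : Ω →ₘ[P] ℝ) (X : E), p (Y • X) = |Y| * p X) ∧
    (∀ X₁ X₂ : E, p (X₁ + X₂) ≤ p X₁ + p X₂)

/-- The set whose essential infimum is the gauge `p_K(X)`. -/
def gaugeSet (K : Set E) (X : E) : Set (Ω →ₘ[P] ℝ) :=
  {Y : Ω →ₘ[P] ℝ | 0 ≤ Y ∧ X ∈ Y • K}

end ModuleDefs

/-!
Since `L⁰₊₊ ⊆ L⁰₊`, it suffices that every lower bound `b` of `{Y ∈ L⁰₊₊ : X ∈ Y•K}` also bounds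
each `Y ∈ L⁰₊` with `X ∈ Y•K`. Absorbency gives `Z ∈ L⁰₊₊` with `X ∈ Z•K`, and `L⁰`-convexity of
`K` puts `X` in `((1 - r)Y + rZ)•K` for every real `0 < r ≤ 1`. This multiplier is strictly
positive, so `b ≤ (1 - r)Y + rZ`, and letting `r = 1/(n+1) → 0` gives `b ≤ Y` a.e.
-/

theorem le_of_forall_nat_le_convexComb {x y z : ℝ}
    (h : ∀ n : ℕ, x ≤ (1 - ((n : ℝ) + 1)⁻¹) * y + ((n : ℝ) + 1)⁻¹ * z) : x ≤ y := by
  have ht : Tendsto (fun n : ℕ => ((n : ℝ) + 1)⁻¹) atTop (nhds 0) := by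
    simpa using tendsto_one_div_add_atTop_nhds_zero_nat (𝕜 := ℝ)
  have hlim : Tendsto (fun n : ℕ => (1 - ((n : ℝ) + 1)⁻¹) * y + ((n : ℝ) + 1)⁻¹ * z)
      atTop (nhds y) := by
    simpa using (((tendsto_const_nhds (x := (1 : ℝ))).sub ht).mul
      (tendsto_const_nhds (x := y))).add (ht.mul (tendsto_const_nhds (x := z)))
  exact ge_of_tendsto' hlim h

namespace MeasureTheory.AEEqFun

variable {μ : Measure Ω}

theorem nonneg_iff {Y : Ω →ₘ[μ] ℝ} : 0 ≤ Y ↔ ∀ᵐ ω ∂μ, 0 ≤ Y ω := by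
  rw [← coeFn_le]
  exact eventually_congr ((coeFn_zero (β := ℝ) (μ := μ)).mono fun ω h => by rw [h]; rfl)

theorem le_one_iff {Y : Ω →ₘ[μ] ℝ} : Y ≤ 1 ↔ ∀ᵐ ω ∂μ, Y ω ≤ 1 := by
  rw [← coeFn_le]
  exact eventually_congr ((coeFn_one (β := ℝ) (μ := μ)).mono fun ω h => by rw [h]; rfl)

theorem _root_.L0pp.nonneg {Y : Ω →ₘ[μ] ℝ} (hY : L0pp μ Y) : 0 ≤ Y :=
  nonneg_iff.2 (hY.mono fun _ h => h.le)

theorem exists_mul_eq_of_le {U W : Ω →ₘ[μ] ℝ} (hU : 0 ≤ U) (hUW : U ≤ W) (hW : L0pp μ W) :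
    ∃ t : Ω →ₘ[μ] ℝ, 0 ≤ t ∧ t ≤ 1 ∧ W * t = U := by
  set t : Ω →ₘ[μ] ℝ := mk (fun ω => U ω / W ω)
    (U.aemeasurable.div W.aemeasurable).aestronglyMeasurable
  have ht : ∀ᵐ ω ∂μ, t ω = U ω / W ω := coeFn_mk _ _
  refine ⟨t, nonneg_iff.2 ?_, le_one_iff.2 ?_, ext ?_⟩
  · filter_upwards [ht, nonneg_iff.1 hU, hW] with ω h hU hW using h ▸ div_nonneg hU hW.le
  · filter_upwards [ht, coeFn_le.2 hUW, hW] with ω h hUW hW using h ▸ (div_le_one hW).2 hUW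
  · filter_upwards [coeFn_mul W t, ht, hW] with ω h h' hW
    rw [h, Pi.mul_apply, h', mul_div_cancel₀ _ hW.ne']

noncomputable def convexComb (r : ℝ) (Y Z : Ω →ₘ[μ] ℝ) : Ω →ₘ[μ] ℝ :=
  (1 - const Ω r) * Y + const Ω r * Z

theorem coeFn_one_sub_const_mul (r : ℝ) (Y : Ω →ₘ[μ] ℝ) :
    ∀ᵐ ω ∂μ, ((1 - const Ω r) * Y : Ω →ₘ[μ] ℝ) ω = (1 - r) * Y ω := by
  filter_upwards [coeFn_mul (1 - const Ω r) Y, coeFn_sub 1 (const Ω r),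
    coeFn_one (β := ℝ) (μ := μ), coeFn_const (μ := μ) Ω r] with ω h h₁ h₂ h₃
  rw [h, Pi.mul_apply, h₁, Pi.sub_apply, h₂, h₃, Pi.one_apply, Function.const_apply]

theorem coeFn_convexComb (r : ℝ) (Y Z : Ω →ₘ[μ] ℝ) :
    ∀ᵐ ω ∂μ, convexComb r Y Z ω = (1 - r) * Y ω + r * Z ω := by
  filter_upwards [coeFn_add ((1 - const Ω r) * Y) (const Ω r * Z),
    coeFn_one_sub_const_mul r Y, coeFn_mul (const Ω r) Z, coeFn_const (μ := μ) Ω r]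
    with ω h h₁ h₂ h₃
  rw [convexComb, h, Pi.add_apply, h₁, h₂, Pi.mul_apply, h₃, Function.const_apply]

end MeasureTheory.AEEqFun

open AEEqFun

section L0Convex

variable {μ : Measure Ω} {E : Type*} [AddCommGroup E] [Module (Ω →ₘ[μ] ℝ) E] {K : Set E}
  {X : E}

theorem IsL0Convex.mem_mul_add_mul_smul (hK : IsL0Convex μ K) {Y Z A B t : Ω →ₘ[μ] ℝ}
    (hY : X ∈ Y • K) (hZ : X ∈ Z • K) (hAB : A + B = 1) (ht0 : 0 ≤ t) (ht1 : t ≤ 1)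
    (ht : (A * Y + B * Z) * t = A * Y) : X ∈ (A * Y + B * Z) • K := by
  obtain ⟨k₁, hk₁, rfl⟩ := hY
  obtain ⟨k₂, hk₂, hX : Z • k₂ = Y • k₁⟩ := hZ
  refine ⟨t • k₁ + (1 - t) • k₂, hK k₁ hk₁ k₂ hk₂ t ht0 ht1, ?_⟩
  have ht' : (A * Y + B * Z) * (1 - t) = B * Z := by rw [mul_sub, mul_one, ht]; ring
  show (A * Y + B * Z) • (t • k₁ + (1 - t) • k₂) = Y • k₁
  calc (A * Y + B * Z) • (t • k₁ + (1 - t) • k₂)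
      = A • (Y • k₁) + B • (Z • k₂) := by
        rw [smul_add, smul_smul, smul_smul, ht, ht', mul_smul, mul_smul]
    _ = Y • k₁ := by rw [hX, ← add_smul, hAB, one_smul]

theorem IsL0Convex.mem_convexComb_smul (hK : IsL0Convex μ K) {Y Z : Ω →ₘ[μ] ℝ}
    (hY0 : 0 ≤ Y) (hY : X ∈ Y • K) (hZ0 : L0pp μ Z) (hZ : X ∈ Z • K) {r : ℝ}
    (hr0 : 0 < r) (hr1 : r ≤ 1) :
    L0pp μ (convexComb r Y Z) ∧ X ∈ convexComb r Y Z • K := by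
  have hU : ∀ᵐ ω ∂μ, 0 ≤ ((1 - const Ω r) * Y : Ω →ₘ[μ] ℝ) ω := by
    filter_upwards [coeFn_one_sub_const_mul r Y, nonneg_iff.1 hY0] with ω h hY0
    exact h ▸ mul_nonneg (sub_nonneg.2 hr1) hY0
  have hUW : ∀ᵐ ω ∂μ, ((1 - const Ω r) * Y : Ω →ₘ[μ] ℝ) ω < convexComb r Y Z ω := by
    filter_upwards [coeFn_convexComb r Y Z, coeFn_one_sub_const_mul r Y, hZ0] with ω h h₁ hZ0
    rw [h, h₁]
    exact lt_add_of_pos_right _ (mul_pos hr0 hZ0)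
  have hW : L0pp μ (convexComb r Y Z) := by
    filter_upwards [hU, hUW] with ω h₁ h₂ using h₁.trans_lt h₂
  obtain ⟨t, ht0, ht1, ht⟩ := exists_mul_eq_of_le (nonneg_iff.2 hU)
    (coeFn_le.1 (hUW.mono fun _ h => h.le)) hW
  exact ⟨hW, hK.mem_mul_add_mul_smul hY hZ (sub_add_cancel _ _) ht0 ht1 ht⟩

theorem lowerBounds_gaugeSet_eq (hK : IsL0Convex μ K) (habs : IsL0Absorbent μ K) (X : E) :
    lowerBounds (gaugeSet μ K X) = lowerBounds {Y : Ω →ₘ[μ] ℝ | L0pp μ Y ∧ X ∈ Y • K} := by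
  have hsub : {Y : Ω →ₘ[μ] ℝ | L0pp μ Y ∧ X ∈ Y • K} ⊆ gaugeSet μ K X :=
    fun Y hY => ⟨hY.1.nonneg, hY.2⟩
  refine (lowerBounds_mono_set hsub).antisymm ?_
  rintro b hb Y ⟨hY0, hY⟩
  obtain ⟨Z, hZ0, hZ⟩ := habs X
  have hbn : ∀ n : ℕ, ∀ᵐ ω ∂μ,
      b ω ≤ (1 - ((n : ℝ) + 1)⁻¹) * Y ω + ((n : ℝ) + 1)⁻¹ * Z ω := fun n =>
    (coeFn_le.2 (hb (hK.mem_convexComb_smul hY0 hY hZ0 hZ (by positivity)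
      (inv_le_one_of_one_le₀ (by simp))))).trans_eq (coeFn_convexComb _ Y Z)
  rw [← coeFn_le]
  filter_upwards [ae_all_iff.2 hbn] with ω hω using le_of_forall_nat_le_convexComb hω

end L0Convex

theorem stmt_5_general {Ω : Type*} [MeasurableSpace Ω] (P : MeasureTheory.Measure Ω)
    {E : Type*} [AddCommGroup E] [Module (Ω →ₘ[P] ℝ) E]
    (K : Set E) (hconv : IsL0Convex P K) (habs : IsL0Absorbent P K)
    (X : E) (a : Ω →ₘ[P] ℝ) :
    IsGLB (gaugeSet P K X) a ↔
      IsGLB {Y : Ω →ₘ[P] ℝ | L0pp P Y ∧ X ∈ Y • K} a := by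
  rw [IsGLB, IsGLB, lowerBounds_gaugeSet_eq hconv habs]

/-- `p_K(X) = ess.inf {Y ∈ L⁰₊₊ : X ∈ Y•K}` for an `L⁰`-convex,
`L⁰`-absorbent `K`. -/
theorem stmt_5 {Ω : Type*} [MeasurableSpace Ω] (P : MeasureTheory.Measure Ω)
    [IsProbabilityMeasure P]
    {E : Type*} [AddCommGroup E] [Module (Ω →ₘ[P] ℝ) E]
    (K : Set E) (hconv : IsL0Convex P K) (habs : IsL0Absorbent P K)
    (X : E) (a : Ω →ₘ[P] ℝ) :
    IsGLB (gaugeSet P K X) a ↔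
      IsGLB {Y : Ω →ₘ[P] ℝ | L0pp P Y ∧ X ∈ Y • K} a :=
  stmt_5_general P K hconv habs X a
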